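/- arXiv:2407.19960 — 2 statements merged into one kernel-verified Lean document; each statement's English description precedes it below -/
import Mathlib

section
/- (Fixed points of the Nash map are exactly the Nash equilibria.) For a two-player finite game, let f(p, q) = (p', q') be the Nash map, with φ1(a)(p,q) = max(0, ū1(δ_a, q) − ū1(p, q)), φ2(b)(p,q) = max(0, ū2(p, δ_b) − ū2(p, q)), p'(a) = (p(a) + φ1(a)(p,q)) / (1 + Σ_{a'} φ1(a')(p,q)), q'(b) = (q(b) + φ2(b)(p,q)) / (1 + Σ_{b'} φ2(b')(p,q)). Then a profile (p, q) ∈ Δ(A1) × Δ(A2) satisfies f(p, q) = (p, q) if and only if (p, q) is a Nash equilibrium, i.e., ū1(p, q) ≥ ū1(p̃, q) for every p̃ ∈ Δ(A1) and ū2(p, q) ≥ ū2(p, q̃) for every q̃ ∈ Δ(A2). -/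
/-- Expected utility of player 1 for mixed strategies `p, q`. -/
noncomputable def ubar1 {A1 A2 : Type*} [Fintype A1] [Fintype A2]
    (u1 : A1 → A2 → ℝ) (p : A1 → ℝ) (q : A2 → ℝ) : ℝ :=
  ∑ a : A1, ∑ b : A2, p a * q b * u1 a b

/-- Expected utility of player 2 for mixed strategies `p, q`. -/
noncomputable def ubar2 {A1 A2 : Type*} [Fintype A1] [Fintype A2]
    (u2 : A1 → A2 → ℝ) (p : A1 → ℝ) (q : A2 → ℝ) : ℝ :=
  ∑ a : A1, ∑ b : A2, p a * q b * u2 a b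

/-- Gain of player 1 from deviating to the pure strategy `a`:
`φ1(a)(p,q) = max (0, ū1(δ_a, q) − ū1(p, q))`. -/
noncomputable def phi1 {A1 A2 : Type*} [Fintype A1] [Fintype A2]
    (u1 : A1 → A2 → ℝ) (p : A1 → ℝ) (q : A2 → ℝ) (a : A1) : ℝ :=
  max 0 ((∑ b : A2, q b * u1 a b) - ubar1 u1 p q)

/-- Gain of player 2 from deviating to the pure strategy `b`:
`φ2(b)(p,q) = max (0, ū2(p, δ_b) − ū2(p, q))`. -/
noncomputable def phi2 {A1 A2 : Type*} [Fintype A1] [Fintype A2]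
    (u2 : A1 → A2 → ℝ) (p : A1 → ℝ) (q : A2 → ℝ) (b : A2) : ℝ :=
  max 0 ((∑ a : A1, p a * u2 a b) - ubar2 u2 p q)

/-- First component of the Nash map. -/
noncomputable def nashMap1 {A1 A2 : Type*} [Fintype A1] [Fintype A2]
    (u1 : A1 → A2 → ℝ) (p : A1 → ℝ) (q : A2 → ℝ) (a : A1) : ℝ :=
  (p a + phi1 u1 p q a) / (1 + ∑ a' : A1, phi1 u1 p q a')

/-- Second component of the Nash map. -/
noncomputable def nashMap2 {A1 A2 : Type*} [Fintype A1] [Fintype A2]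
    (u2 : A1 → A2 → ℝ) (p : A1 → ℝ) (q : A2 → ℝ) (b : A2) : ℝ :=
  (q b + phi2 u2 p q b) / (1 + ∑ b' : A2, phi2 u2 p q b')

/-- Abstract one-player key lemma. -/
lemma nash_key {A : Type*} [Fintype A] (g : A → ℝ) (p : A → ℝ) (hp : p ∈ stdSimplex ℝ A) :
    (∀ a, (p a + max 0 (g a - ∑ x, p x * g x)) /
        (1 + ∑ x, max 0 (g x - ∑ y, p y * g y)) = p a)
    ↔ ∀ a, g a ≤ ∑ x, p x * g x := by
  obtain ⟨hp0, hp1⟩ := hp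
  set u := ∑ x, p x * g x with hu
  set φ : A → ℝ := fun a => max 0 (g a - u) with hφ
  have hφ0 : ∀ a, 0 ≤ φ a := fun a => le_max_left _ _
  set S := ∑ x, φ x with hS
  have hS0 : 0 ≤ S := Finset.sum_nonneg fun a _ => hφ0 a
  have hpos : (0:ℝ) < 1 + S := by linarith
  constructor
  · intro h
    have hfix : ∀ a, φ a = p a * S := by
      intro a
      have h2 := h a
      rw [div_eq_iff (ne_of_gt hpos)] at h2
      nlinarith [h2]
    have hsum0 : ∑ a, p a * (g a - u) = 0 := by
      have e : ∑ a, p a * (g a - u) = (∑ a, p a * g a) - (∑ a, p a) * u := by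
        rw [Finset.sum_mul, ← Finset.sum_sub_distrib]
        exact Finset.sum_congr rfl fun a _ => by ring
      rw [e, hp1, one_mul, ← hu, sub_self]
    have hSz : S = 0 := by
      by_contra hne
      have hSpos : 0 < S := lt_of_le_of_ne hS0 (Ne.symm hne)
      obtain ⟨a0, ha0⟩ : ∃ a, 0 < p a := by
        by_contra hc
        push_neg at hc
        have : ∑ a, p a = 0 :=
          Finset.sum_eq_zero fun a _ => le_antisymm (hc a) (hp0 a)
        rw [hp1] at this; norm_num at this
      have hterm : ∀ a, 0 ≤ p a * (g a - u) := by
        intro a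
        rcases eq_or_lt_of_le (hp0 a) with he | hl
        · rw [← he, zero_mul]
        · have hφpos : 0 < φ a := by rw [hfix a]; positivity
          have hgu : 0 < g a - u := by
            rcases lt_max_iff.mp hφpos with h' | h'
            · exact absurd h' (lt_irrefl 0)
            · exact h'
          positivity
      have hstrict : 0 < ∑ a, p a * (g a - u) := by
        apply Finset.sum_pos' (fun a _ => hterm a)
        refine ⟨a0, Finset.mem_univ _, ?_⟩
        have hφpos : 0 < φ a0 := by rw [hfix a0]; positivity
        have hgu : 0 < g a0 - u := by
          rcases lt_max_iff.mp hφpos with h' | h'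
          · exact absurd h' (lt_irrefl 0)
          · exact h'
        positivity
      rw [hsum0] at hstrict; exact lt_irrefl 0 hstrict
    intro a
    have hsum : ∑ x, φ x = 0 := by rw [← hS]; exact hSz
    have hz : φ a = 0 :=
      (Finset.sum_eq_zero_iff_of_nonneg (fun a _ => hφ0 a)).mp hsum a (Finset.mem_univ a)
    have : g a - u ≤ 0 := max_eq_left_iff.mp hz
    linarith
  · intro h a
    have hz : ∀ x, φ x = 0 := fun x => max_eq_left (sub_nonpos.mpr (h x))
    have hSz : S = 0 := by rw [hS]; exact Finset.sum_eq_zero fun x _ => hz x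
    show (p a + φ a) / (1 + S) = p a
    rw [hz a, hSz]; simp

/-- Pure-strategy characterization of a best response. -/
lemma nash_pure {A : Type*} [Fintype A] (g : A → ℝ) (p : A → ℝ) (hp : p ∈ stdSimplex ℝ A) :
    (∀ p' ∈ stdSimplex ℝ A, ∑ a, p' a * g a ≤ ∑ a, p a * g a)
    ↔ ∀ a, g a ≤ ∑ a, p a * g a := by
  classical
  constructor
  · intro h a
    have hmem : (fun x => if x = a then (1:ℝ) else 0) ∈ stdSimplex ℝ A := by
      constructor
      · intro x; dsimp; split <;> norm_num
      · simp
    have := h _ hmem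
    simpa using this
  · intro h p' hp'
    obtain ⟨h0, h1⟩ := hp'
    calc ∑ a, p' a * g a ≤ ∑ a, p' a * (∑ x, p x * g x) :=
          Finset.sum_le_sum fun a _ => mul_le_mul_of_nonneg_left (h a) (h0 a)
      _ = ∑ x, p x * g x := by rw [← Finset.sum_mul, h1, one_mul]

/-- a mixed strategy profile `(p, q) ∈ Δ(A1) × Δ(A2)` is a fixed point of
the Nash map if and only if it is a Nash equilibrium. -/
theorem stmt_5 {A1 A2 : Type*} [Fintype A1] [Fintype A2] [Nonempty A1] [Nonempty A2]
    (u1 u2 : A1 → A2 → ℝ) (p : A1 → ℝ) (q : A2 → ℝ)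
    (hp : p ∈ stdSimplex ℝ A1) (hq : q ∈ stdSimplex ℝ A2) :
    (nashMap1 u1 p q = p ∧ nashMap2 u2 p q = q) ↔
      ((∀ p' ∈ stdSimplex ℝ A1, ubar1 u1 p' q ≤ ubar1 u1 p q) ∧
        (∀ q' ∈ stdSimplex ℝ A2, ubar2 u2 p q' ≤ ubar2 u2 p q)) := by
  have e1 : ∀ p' : A1 → ℝ, ubar1 u1 p' q = ∑ a, p' a * ∑ b, q b * u1 a b := by
    intro p'
    unfold ubar1
    exact Finset.sum_congr rfl fun a _ => by
      rw [Finset.mul_sum]; exact Finset.sum_congr rfl fun b _ => by ring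
  have e2 : ∀ q' : A2 → ℝ, ubar2 u2 p q' = ∑ b, q' b * ∑ a, p a * u2 a b := by
    intro q'
    unfold ubar2
    rw [Finset.sum_comm]
    exact Finset.sum_congr rfl fun b _ => by
      rw [Finset.mul_sum]; exact Finset.sum_congr rfl fun a _ => by ring
  have comp1 : nashMap1 u1 p q = p ↔
      ∀ p' ∈ stdSimplex ℝ A1, ubar1 u1 p' q ≤ ubar1 u1 p q := by
    simp only [funext_iff, nashMap1, phi1, e1]
    exact (nash_key (fun a => ∑ b, q b * u1 a b) p hp).trans
      (nash_pure (fun a => ∑ b, q b * u1 a b) p hp).symm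
  have comp2 : nashMap2 u2 p q = q ↔
      ∀ q' ∈ stdSimplex ℝ A2, ubar2 u2 p q' ≤ ubar2 u2 p q := by
    simp only [funext_iff, nashMap2, phi2, e2]
    exact (nash_key (fun b => ∑ a, p a * u2 a b) q hq).trans
      (nash_pure (fun b => ∑ a, p a * u2 a b) q hq).symm
  rw [comp1, comp2]
end

section
/- (Proposition 3, full NE statement for the static ST game.) Let N be a positive integer, let R_A, R_E, R_{A,E} be N×N complex matrices with R_A Hermitian positive semidefinite with largest eigenvalue λ_max(R_A), let R_A^D ≥ 0, R_E^D, C_E, T_s > 0, B > 0, w_d ≥ 0, w_k ≥ 0 be real constants, and let Re(·) denote real part. For v ∈ ℂ^N define z(v) = Re(v^H R_A v) + R_A^D, Alice's utility u_A(v, κ) for κ = 0 as u_A(v, 0) = w_d · B · log₂(1 + z(v)) + (w_k / T_s) · log₂( (1 + z(v))² / (1 + 2 z(v)) ), and Eve's utility u_E(v, κ) = κ · (g_E(v) − C_E) for κ ∈ {0, 1}, where g_E(v) is any real-valued function (the leaked key rate at Eve). Suppose v* ∈ ℂ^N satisfies Re(v*^H R_A v*) = N · λ_max(R_A) and C_E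 ≥ g_E(v*). Then (v*, 0) is a pure-strategy Nash equilibrium in the sense that u_A(v*, 0) ≥ u_A(v, 0) for every v ∈ ℂ^N with v^H v = N, and u_E(v*, 0) ≥ u_E(v*, κ) for every κ ∈ {0, 1}. -/
open Matrix
open scoped ComplexOrder

/-!
Alice's utility is a nondecreasing function of `z(v) ≥ 0`: both `log₂(1 + z)` and
`(1 + z)² / (1 + 2z) = 1 + z² / (1 + 2z)` increase on `[0, ∞)`. On the sphere `vᴴv = N` the
Rayleigh bound `Re(vᴴ R_A v) ≤ λ_max(R_A) · vᴴv` (from `R_A ≤ λ_max • 1` in the Loewner order)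
shows that `v*` maximizes `z`. Eve's utility at `κ ∈ {0, 1}` is `κ (g_E(v*) − C_E) ≤ 0`.
-/

theorem Matrix.IsHermitian.re_dotProduct_mulVec_le_iSup_eigenvalues_mul {𝕜 n : Type*} [RCLike 𝕜]
    [Fintype n] [DecidableEq n] {A : Matrix n n 𝕜} (hA : A.IsHermitian) (v : n → 𝕜) :
    RCLike.re (star v ⬝ᵥ (A *ᵥ v)) ≤ (⨆ i, hA.eigenvalues i) * RCLike.re (star v ⬝ᵥ v) := by
  open MatrixOrder in
  have hle : A ≤ algebraMap ℝ (Matrix n n 𝕜) (⨆ i, hA.eigenvalues i) := by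
    refine le_algebraMap_of_spectrum_le ?_ hA.isSelfAdjoint
    rw [hA.spectrum_real_eq_range_eigenvalues]
    rintro _ ⟨i, rfl⟩
    exact le_ciSup (Set.finite_range _).bddAbove i
  simpa [Algebra.algebraMap_eq_smul_one, sub_mulVec, dotProduct_sub, smul_mulVec,
    dotProduct_smul, RCLike.smul_re] using (Matrix.le_iff.mp hle).re_dotProduct_nonneg v

theorem monotoneOn_add_logb_sq_div {c d : ℝ} (hc : 0 ≤ c) (hd : 0 ≤ d) :
    MonotoneOn (fun z : ℝ ↦ c * Real.logb 2 (1 + z) + d * Real.logb 2 ((1 + z) ^ 2 / (1 + 2 * z)))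
      (Set.Ici 0) := by
  intro a (ha : 0 ≤ a) b (hb : 0 ≤ b) hab
  have h_log : Real.logb 2 (1 + a) ≤ Real.logb 2 (1 + b) :=
    Real.logb_le_logb_of_le one_lt_two (by positivity) (by linarith)
  have h_ratio : (1 + a) ^ 2 / (1 + 2 * a) ≤ (1 + b) ^ 2 / (1 + 2 * b) := by
    rw [div_le_div_iff₀ (by positivity) (by positivity)]
    nlinarith [mul_nonneg (sub_nonneg.2 hab) (mul_nonneg ha hb),
      mul_nonneg (sub_nonneg.2 hab) (add_nonneg ha hb)]
  have h_log_ratio := Real.logb_le_logb_of_le one_lt_two (by positivity) h_ratio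
  dsimp only
  gcongr

theorem stmt_11_general (N : ℕ)
    (RA : Matrix (Fin N) (Fin N) ℂ) (hRA : RA.PosSemidef)
    (RAD : ℝ) (hRAD : 0 ≤ RAD) (CE : ℝ)
    (wd wk B Ts : ℝ) (hwd : 0 ≤ wd) (hwk : 0 ≤ wk) (hB : 0 < B) (hTs : 0 < Ts)
    (z : (Fin N → ℂ) → ℝ) (hz : ∀ v, z v = (star v ⬝ᵥ (RA *ᵥ v)).re + RAD)
    (uA : (Fin N → ℂ) → ℝ → ℝ)
    (huA : ∀ v, uA v 0 = wd * B * Real.logb 2 (1 + z v) +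
      (wk / Ts) * Real.logb 2 ((1 + z v) ^ 2 / (1 + 2 * z v)))
    (gE : (Fin N → ℂ) → ℝ)
    (uE : (Fin N → ℂ) → ℝ → ℝ)
    (huE : ∀ v, ∀ κ ∈ ({0, 1} : Set ℝ), uE v κ = κ * (gE v - CE))
    (vstar : Fin N → ℂ)
    (hvstar : (star vstar ⬝ᵥ (RA *ᵥ vstar)).re =
      (N : ℝ) * ⨆ i : Fin N, hRA.isHermitian.eigenvalues i)
    (hCE : gE vstar ≤ CE) :
    (∀ v : Fin N → ℂ, star v ⬝ᵥ v = (N : ℂ) → uA v 0 ≤ uA vstar 0) ∧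
      (∀ κ ∈ ({0, 1} : Set ℝ), uE vstar κ ≤ uE vstar 0) := by
  refine ⟨fun v hv ↦ ?_, fun κ hκ ↦ ?_⟩
  · have h_rayleigh := hRA.isHermitian.re_dotProduct_mulVec_le_iSup_eigenvalues_mul v
    rw [hv, RCLike.natCast_re] at h_rayleigh
    have hz_nonneg : 0 ≤ z v := by
      rw [hz]
      exact add_nonneg (hRA.re_dotProduct_nonneg v) hRAD
    have hz_le : z v ≤ z vstar := by
      rw [hz, hz, hvstar, mul_comm]
      exact add_le_add_left h_rayleigh RAD
    rw [huA, huA]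
    exact monotoneOn_add_logb_sq_div (by positivity) (by positivity) hz_nonneg
      (hz_nonneg.trans hz_le) hz_le
  · rw [huE vstar κ hκ, huE vstar 0 (by simp), zero_mul]
    rcases hκ with rfl | rfl <;> linarith

/-- Proposition 3, full NE statement for the static ST game:
if `Re(v*^H R_A v*) = N·λ_max(R_A)` and `C_E ≥ g_E(v*)`, then `(v*, 0)` is a
pure-strategy Nash equilibrium: `v*` maximizes Alice's utility
`u_A(v, 0) = w_d B log₂(1+z(v)) + (w_k/T_s) log₂((1+z(v))²/(1+2z(v)))` over
`{v : v^H v = N}`, and `κ = 0` maximizes Eve's utility `u_E(v*, κ) = κ(g_E(v*) − C_E)`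
over `κ ∈ {0, 1}`. -/
theorem stmt_11 (N : ℕ) (hN : 0 < N)
    (RA RE RAE : Matrix (Fin N) (Fin N) ℂ) (hRA : RA.PosSemidef)
    (RAD : ℝ) (hRAD : 0 ≤ RAD) (RED CE : ℝ)
    (wd wk B Ts : ℝ) (hwd : 0 ≤ wd) (hwk : 0 ≤ wk) (hB : 0 < B) (hTs : 0 < Ts)
    (z : (Fin N → ℂ) → ℝ) (hz : ∀ v, z v = (star v ⬝ᵥ (RA *ᵥ v)).re + RAD)
    (uA : (Fin N → ℂ) → ℝ → ℝ)
    (huA : ∀ v, uA v 0 = wd * B * Real.logb 2 (1 + z v) +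
      (wk / Ts) * Real.logb 2 ((1 + z v) ^ 2 / (1 + 2 * z v)))
    (gE : (Fin N → ℂ) → ℝ)
    (uE : (Fin N → ℂ) → ℝ → ℝ)
    (huE : ∀ v, ∀ κ ∈ ({0, 1} : Set ℝ), uE v κ = κ * (gE v - CE))
    (vstar : Fin N → ℂ)
    (hvstar : (star vstar ⬝ᵥ (RA *ᵥ vstar)).re =
      (N : ℝ) * ⨆ i : Fin N, hRA.isHermitian.eigenvalues i)
    (hCE : gE vstar ≤ CE) :
    (∀ v : Fin N → ℂ, star v ⬝ᵥ v = (N : ℂ) → uA v 0 ≤ uA vstar 0) ∧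
      (∀ κ ∈ ({0, 1} : Set ℝ), uE vstar κ ≤ uE vstar 0) :=
  stmt_11_general N RA hRA RAD hRAD CE wd wk B Ts hwd hwk hB hTs z hz uA huA gE uE huE vstar hvstar
    hCE
end
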